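/- arXiv:2202.07167 — 3 statements merged into one kernel-verified Lean document; each statement's English description precedes it below -/
import Mathlib

section
/- Lower-bound geometric sum estimate (Lemma: k = n case, lower bound on consumed potential): Let k > ℓ ≥ 1 be integers, α ≥ 2, γ > 0, and p ≥ 2γ ln k / (ℓ(1/k + 1/k^α)). If additionally k^{α−γ} ≥ 3k, then ℓ(k−ℓ)(1/k − 1/k^α)·∑_{i=0}^{p−1}(1 − ℓ(1/k + 1/k^α))^i ≥ (k−ℓ)(1 − 1/k^γ). -/
/-!
Put `x = ℓ (1/k + 1/k^α)`, so that `0 < x ≤ 1`. The geometric sum equals `(1 - (1-x)^p) / x`, and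
`(1-x)^p ≤ exp(-p x) ≤ k^(-2γ)` by the choice of `p`. What remains is the elementary inequality
`(1 - 1/k^γ)(1/k + 1/k^α) ≤ (1/k - 1/k^α)(1 - 1/k^(2γ))`; after cancelling `1 - 1/k^γ` it reads
`k^α ≥ 2 k^(1+γ) + k`, which follows from `k^(α-γ) ≥ 3k`.
-/

open Real Finset

lemma one_sub_exp_neg_mul_le_geom_sum_mul {x : ℝ} (hx1 : x ≤ 1) (p : ℕ) :
    1 - exp (-(p * x)) ≤ (∑ i ∈ range p, (1 - x) ^ i) * x := by
  have hpow : (1 - x) ^ p ≤ exp (-(p * x)) :=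
    calc (1 - x) ^ p ≤ exp (-x) ^ p := pow_le_pow_left₀ (by linarith) (one_sub_le_exp_neg x) p
      _ = exp (-(p * x)) := by rw [← exp_nat_mul]; ring_nf
  have hgeom := geom_sum_mul_neg (1 - x) p
  rw [sub_sub_cancel] at hgeom
  linarith

lemma exp_neg_mul_log_eq_one_div_rpow_sq {K : ℝ} (hK : 0 < K) (γ : ℝ) :
    exp (-(2 * γ * log K)) = 1 / (K ^ γ) ^ 2 := by
  rw [rpow_def_of_pos hK, ← exp_nat_mul, one_div, ← exp_neg]
  ring_nf

lemma one_sub_one_div_rpow_sq_div_le_geom_sum {K γ x : ℝ} (hK : 0 < K) (hx0 : 0 < x)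
    (hx1 : x ≤ 1) {p : ℕ} (hp : 2 * γ * log K / x ≤ p) :
    (1 - 1 / (K ^ γ) ^ 2) / x ≤ ∑ i ∈ range p, (1 - x) ^ i := by
  rw [div_le_iff₀ hx0, ← exp_neg_mul_log_eq_one_div_rpow_sq hK]
  have hexp : exp (-(p * x)) ≤ exp (-(2 * γ * log K)) :=
    exp_le_exp.mpr (by linarith [(div_le_iff₀ hx0).mp hp])
  linarith [one_sub_exp_neg_mul_le_geom_sum_mul hx1 p]

lemma mul_one_div_add_one_div_le_one {K L A : ℝ} (hK : 0 < K) (hLK : L + 1 ≤ K)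
    (hKA : K ^ 2 ≤ A) : L * (1 / K + 1 / A) ≤ 1 := by
  have hA : 0 < A := by nlinarith
  rw [div_add_div _ _ hK.ne' hA.ne', mul_div_assoc', div_le_one (by positivity)]
  nlinarith

lemma one_div_add_le_one_div_sub_mul_one_add_one_div {K A G : ℝ} (hK : 0 < K) (hG : 0 < G)
    (hA : 2 * K * G + K ≤ A) : 1 / K + 1 / A ≤ (1 / K - 1 / A) * (1 + 1 / G) := by
  have hA0 : 0 < A := by nlinarith
  rw [div_add_div _ _ hK.ne' hA0.ne', div_sub_div _ _ hK.ne' hA0.ne', one_add_div hG.ne',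
    div_mul_div_comm, div_le_div_iff₀ (by positivity) (by positivity)]
  nlinarith [mul_pos (mul_pos hK hA0) hG]

lemma one_sub_one_div_mul_one_div_add_le {K A G : ℝ} (hK : 0 < K) (hG : 1 ≤ G) (hA : 2 * K * G + K ≤ A) :
    (1 - 1 / G) * (1 / K + 1 / A) ≤ (1 / K - 1 / A) * (1 - 1 / G ^ 2) := by
  have hG0 : 0 < G := by linarith
  have hfactor : 1 - 1 / G ^ 2 = (1 - 1 / G) * (1 + 1 / G) := by field_simp; ring
  have hnonneg : 0 ≤ 1 - 1 / G := by
    rw [sub_nonneg, div_le_one hG0]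
    exact hG
  rw [hfactor, mul_left_comm]
  exact mul_le_mul_of_nonneg_left
    (one_div_add_le_one_div_sub_mul_one_add_one_div hK hG0 hA) hnonneg

/-- Lower-bound geometric sum estimate (case `k = n`, lower bound on consumed
potential). -/
theorem stmt13 (k ℓ : ℕ) (hℓ : 1 ≤ ℓ) (hℓk : ℓ < k)
    (α γ : ℝ) (hα : 2 ≤ α) (hγ : 0 < γ) (p : ℕ)
    (hp : 2 * γ * Real.log k / ((ℓ : ℝ) * (1 / (k : ℝ) + 1 / (k : ℝ) ^ α)) ≤ (p : ℝ))
    (hkαγ : 3 * (k : ℝ) ≤ (k : ℝ) ^ (α - γ)) :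
    ((k : ℝ) - ℓ) * (1 - 1 / (k : ℝ) ^ γ)
      ≤ (ℓ : ℝ) * ((k : ℝ) - ℓ) * (1 / (k : ℝ) - 1 / (k : ℝ) ^ α) *
          ∑ i ∈ Finset.range p,
            (1 - (ℓ : ℝ) * (1 / (k : ℝ) + 1 / (k : ℝ) ^ α)) ^ i := by
  have hL : (1 : ℝ) ≤ ℓ := by exact_mod_cast hℓ
  have hLK : (ℓ : ℝ) + 1 ≤ k := by exact_mod_cast hℓk
  set K : ℝ := (k : ℝ)
  set L : ℝ := (ℓ : ℝ)
  have hK : 1 < K := by linarith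
  set A := K ^ α
  set G := K ^ γ
  set x := L * (1 / K + 1 / A)
  have hG : 1 ≤ G := one_le_rpow hK.le hγ.le
  have hKA : K ^ 2 ≤ A := by
    simpa only [rpow_two] using rpow_le_rpow_of_exponent_le hK.le hα
  have hA : 0 < A := by positivity
  have hKGA : 3 * K * G ≤ A :=
    calc 3 * K * G ≤ K ^ (α - γ) * G := by gcongr
      _ = A := by rw [← rpow_add (by linarith), sub_add_cancel]
  have hx0 : 0 < x := by positivity
  have hx1 : x ≤ 1 := mul_one_div_add_one_div_le_one (by linarith) hLK hKA
  have hKL : 0 ≤ L * (K - L) := by nlinarith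
  have hcoef : 0 ≤ 1 / K - 1 / A :=
    sub_nonneg.mpr (one_div_le_one_div_of_le (by linarith) (by nlinarith))
  calc (K - L) * (1 - 1 / G) = L * (K - L) * ((1 - 1 / G) * (1 / K + 1 / A)) / x := by
        simp only [x]
        field_simp
    _ ≤ L * (K - L) * ((1 / K - 1 / A) * (1 - 1 / G ^ 2)) / x := by
        gcongr ?_ / x
        exact mul_le_mul_of_nonneg_left (one_sub_one_div_mul_one_div_add_le (by linarith) hG (by nlinarith)) hKL
    _ = L * (K - L) * (1 / K - 1 / A) * ((1 - 1 / G ^ 2) / x) := by ring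
    _ ≤ L * (K - L) * (1 / K - 1 / A) * ∑ i ∈ range p, (1 - x) ^ i :=
        mul_le_mul_of_nonneg_left (one_sub_one_div_rpow_sq_div_le_geom_sum (by linarith) hx0 hx1 hp)
          (mul_nonneg hKL hcoef)
end

section
/- Upper-bound geometric sum estimate (k = n case, upper bound on consumed potential): Let k > ℓ ≥ 1 be integers, α ≥ 2, γ > 0 with k^{α−γ} ≥ 3k, and let p ≥ 1. Then ℓ(k−ℓ)(1/k + 1/k^α)·∑_{i=0}^{p−1}(1 − ℓ(1/k − 1/k^α))^i ≤ (k−ℓ)(1 + 1/k^γ). -/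
lemma stmt14_aux (kR ℓR A G : ℝ) (hk2 : 2 ≤ kR) (hℓR : 1 ≤ ℓR)
    (hℓkR : ℓR + 1 ≤ kR) (hG1 : 1 ≤ G)
    (hkey : 2 * kR * G + kR ≤ A) (p : ℕ) :
    ℓR * (kR - ℓR) * (1 / kR + 1 / A) *
        ∑ i ∈ Finset.range p, (1 - ℓR * (1 / kR - 1 / A)) ^ i
      ≤ (kR - ℓR) * (1 + 1 / G) := by
  have hkpos : (0 : ℝ) < kR := by linarith
  have hGpos : (0 : ℝ) < G := by linarith
  have hAk : kR < A := by nlinarith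
  have hApos : (0 : ℝ) < A := by linarith
  have hdiffpos : (0 : ℝ) < 1 / kR - 1 / A := by
    have : 1 / A < 1 / kR := one_div_lt_one_div_of_lt hkpos hAk
    linarith
  set d : ℝ := ℓR * (1 / kR - 1 / A) with hd
  have hℓpos : (0 : ℝ) < ℓR := by linarith
  have hdpos : 0 < d := mul_pos hℓpos hdiffpos
  have hd1 : d < 1 := by
    have h1 : 1 / kR - 1 / A ≤ 1 / kR := by
      have : 0 < 1 / A := by positivity
      linarith
    have h2 : d ≤ ℓR * (1 / kR) := mul_le_mul_of_nonneg_left h1 (by linarith)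
    have h3 : ℓR * (1 / kR) < 1 := by
      rw [mul_one_div, div_lt_one hkpos]; linarith
    linarith
  have hsum : ∑ i ∈ Finset.range p, (1 - d) ^ i ≤ 1 / d := by
    have hr0 : (0 : ℝ) ≤ 1 - d := by linarith
    have hrne : (1 : ℝ) - d ≠ 1 := by intro h; simp at h; linarith
    have e : ((1 - d) ^ p - 1) / ((1 - d) - 1) = (1 - (1 - d) ^ p) / d := by
      rw [show (1 - d) - 1 = -d by ring, div_neg]
      ring
    rw [geom_sum_eq hrne, e]
    have hpow : 0 ≤ (1 - d) ^ p := pow_nonneg hr0 p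
    gcongr
    linarith
  have hkℓ0 : (0 : ℝ) ≤ kR - ℓR := by linarith
  have hcoef : 0 ≤ ℓR * (kR - ℓR) * (1 / kR + 1 / A) :=
    mul_nonneg (mul_nonneg hℓpos.le hkℓ0) (by positivity)
  have hstep : ℓR * (kR - ℓR) * (1 / kR + 1 / A) *
      ∑ i ∈ Finset.range p, (1 - d) ^ i ≤
      ℓR * (kR - ℓR) * (1 / kR + 1 / A) * (1 / d) :=
    mul_le_mul_of_nonneg_left hsum hcoef
  refine hstep.trans ?_
  rw [hd]
  have hkne : kR ≠ 0 := ne_of_gt hkpos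
  have hAne : A ≠ 0 := ne_of_gt hApos
  have hGne : G ≠ 0 := ne_of_gt hGpos
  have hℓne : ℓR ≠ 0 := ne_of_gt hℓpos
  have hdiffne : (1 / kR - 1 / A) ≠ 0 := ne_of_gt hdiffpos
  have heq : ℓR * (kR - ℓR) * (1 / kR + 1 / A) * (1 / (ℓR * (1 / kR - 1 / A))) =
      (kR - ℓR) * ((1 / kR + 1 / A) / (1 / kR - 1 / A)) := by
    have key : ∀ a b c e : ℝ, a ≠ 0 → e ≠ 0 →
        a * b * c * (1 / (a * e)) = b * (c / e) := by
      intro a b c e ha he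
      field_simp
    exact key ℓR (kR - ℓR) (1 / kR + 1 / A) (1 / kR - 1 / A) hℓne hdiffne
  rw [heq]
  have hfrac : (1 / kR + 1 / A) / (1 / kR - 1 / A) ≤ 1 + 1 / G := by
    rw [div_le_iff₀ hdiffpos]
    have hpos : (0 : ℝ) < kR * A * G := by positivity
    have hid : (1 + 1 / G) * (1 / kR - 1 / A) - (1 / kR + 1 / A) =
        (A - 2 * kR * G - kR) / (kR * A * G) := by
      field_simp
      ring
    have h2 : 0 ≤ (A - 2 * kR * G - kR) / (kR * A * G) :=
      div_nonneg (by linarith) hpos.le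
    linarith [hid ▸ h2]
  exact mul_le_mul_of_nonneg_left hfrac hkℓ0

/-- Upper-bound geometric sum estimate (case `k = n`, upper bound on consumed
potential). -/
theorem stmt14 (k ℓ : ℕ) (hℓ : 1 ≤ ℓ) (hℓk : ℓ < k)
    (α γ : ℝ) (hα : 2 ≤ α) (hγ : 0 < γ)
    (hkαγ : 3 * (k : ℝ) ≤ (k : ℝ) ^ (α - γ)) (p : ℕ) (hp : 1 ≤ p) :
    (ℓ : ℝ) * ((k : ℝ) - ℓ) * (1 / (k : ℝ) + 1 / (k : ℝ) ^ α) *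
        ∑ i ∈ Finset.range p,
          (1 - (ℓ : ℝ) * (1 / (k : ℝ) - 1 / (k : ℝ) ^ α)) ^ i
      ≤ ((k : ℝ) - ℓ) * (1 + 1 / (k : ℝ) ^ γ) := by
  have hk2 : (2 : ℝ) ≤ (k : ℝ) := by
    have : 2 ≤ k := lt_of_le_of_lt hℓ hℓk
    exact_mod_cast this
  have hkpos : (0 : ℝ) < (k : ℝ) := by linarith
  have hℓR : (1 : ℝ) ≤ (ℓ : ℝ) := by exact_mod_cast hℓ
  have hℓkR : (ℓ : ℝ) + 1 ≤ (k : ℝ) := by exact_mod_cast hℓk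
  have hG1 : (1 : ℝ) ≤ (k : ℝ) ^ γ := Real.one_le_rpow (by linarith) hγ.le
  have hGpos : (0 : ℝ) < (k : ℝ) ^ γ := by linarith
  have hsub : (k : ℝ) ^ (α - γ) = (k : ℝ) ^ α / (k : ℝ) ^ γ :=
    Real.rpow_sub hkpos α γ
  have hAG : 3 * (k : ℝ) * (k : ℝ) ^ γ ≤ (k : ℝ) ^ α := by
    have h := hkαγ.trans_eq hsub
    exact (le_div_iff₀ hGpos).mp h
  have hkey : 2 * (k : ℝ) * (k : ℝ) ^ γ + (k : ℝ) ≤ (k : ℝ) ^ α := by nlinarith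
  exact stmt14_aux (k : ℝ) (ℓ : ℝ) ((k : ℝ) ^ α) ((k : ℝ) ^ γ)
    hk2 hℓR hℓkR hG1 hkey p
end

section
/- Case k > n, final inequality: Let k > n ≥ 2 and ℓ ≥ 1 be integers with ℓ < n, let γ > log_k(n − ℓ + 1) and δ > log_k( k^γ(n−ℓ) / (k^γ − (n−ℓ) − 1) ) (assuming the argument of the logarithm is positive). Then (n−ℓ)(1 + 1/k^δ) < (k−ℓ)(1 − 1/k^γ). -/
/-!
Write `m = n - ℓ`, `A = k ^ γ` and `B = k ^ δ`. The hypothesis on `δ` says exactly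
`m * A < B * (A - m - 1)`, i.e. `m / B < 1 - (m + 1) / A`, hence
`m * (1 + 1 / B) < (m + 1) * (1 - 1 / A)`, and `m + 1 ≤ k - ℓ` because `n < k`.
-/

theorem mul_one_add_one_div_lt_mul_one_sub_one_div {m c A B : ℝ} (hm : 0 ≤ m)
    (hc : m + 1 ≤ c) (hA : m + 1 < A) (hB : A * m / (A - m - 1) < B) :
    m * (1 + 1 / B) < c * (1 - 1 / A) := by
  have hA₀ : 0 < A := by linarith
  have hgap : 0 < A - m - 1 := by linarith
  have hB₀ : 0 < B := lt_of_le_of_lt (by positivity) hB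
  have hmB : m / B < (A - m - 1) / A := by
    rw [div_lt_div_iff₀ hB₀ hA₀]
    rw [div_lt_iff₀ hgap] at hB
    linarith
  have hthreshold : 0 ≤ 1 - 1 / A := by
    rw [sub_nonneg, div_le_one hA₀]
    linarith
  calc m * (1 + 1 / B) = m + m / B := by ring
    _ < m + (A - m - 1) / A := by linarith
    _ = (m + 1) * (1 - 1 / A) := by field_simp; ring
    _ ≤ c * (1 - 1 / A) := mul_le_mul_of_nonneg_right hc hthreshold

theorem stmt18_general (k n ℓ : ℕ) (hnk : n < k) (hℓn : ℓ < n)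
    (γ δ : ℝ)
    (hpos : 0 < (k : ℝ) ^ γ - ((n : ℝ) - ℓ) - 1)
    (hδ : Real.logb k ((k : ℝ) ^ γ * ((n : ℝ) - ℓ) /
            ((k : ℝ) ^ γ - ((n : ℝ) - ℓ) - 1)) < δ) :
    ((n : ℝ) - ℓ) * (1 + 1 / (k : ℝ) ^ δ)
      < ((k : ℝ) - ℓ) * (1 - 1 / (k : ℝ) ^ γ) := by
  have hℓn' : (ℓ : ℝ) + 1 ≤ n := by exact_mod_cast hℓn
  have hnk' : (n : ℝ) + 1 ≤ k := by exact_mod_cast hnk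
  have hk : (1 : ℝ) < k := by linarith [(ℓ.cast_nonneg : (0 : ℝ) ≤ ℓ)]
  have harg : 0 < (k : ℝ) ^ γ * ((n : ℝ) - ℓ) / ((k : ℝ) ^ γ - ((n : ℝ) - ℓ) - 1) :=
    div_pos (mul_pos (by positivity) (by linarith)) hpos
  exact mul_one_add_one_div_lt_mul_one_sub_one_div (by linarith) (by linarith) (by linarith)
    ((Real.logb_lt_iff_lt_rpow hk harg).mp hδ)

/-- Case `k > n`: a high estimate forces the accumulated potential below the
acceptance threshold. -/
theorem stmt18 (k n ℓ : ℕ) (hn : 2 ≤ n) (hnk : n < k) (hℓ : 1 ≤ ℓ) (hℓn : ℓ < n)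
    (γ δ : ℝ) (hγ : Real.logb k ((n : ℝ) - ℓ + 1) < γ)
    (hpos : 0 < (k : ℝ) ^ γ - ((n : ℝ) - ℓ) - 1)
    (hδ : Real.logb k ((k : ℝ) ^ γ * ((n : ℝ) - ℓ) /
            ((k : ℝ) ^ γ - ((n : ℝ) - ℓ) - 1)) < δ) :
    ((n : ℝ) - ℓ) * (1 + 1 / (k : ℝ) ^ δ)
      < ((k : ℝ) - ℓ) * (1 - 1 / (k : ℝ) ^ γ) :=
  stmt18_general k n ℓ hnk hℓn γ δ hpos hδ
end
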